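/- arXiv:math/0605016 — 6 statements merged into one kernel-verified Lean document; each statement's English description precedes it below -/
import Mathlib

section
/- Let d ≥ 1 and e ≥ 0 be integers, let R be a nonzero complex polynomial, set d₂ = e + d·(deg R), and assume d₂ ≥ 1 and gcd(d, d₂) = 1. Let Y be an arbitrary type and let U, V : ℂ → Y be functions such that U(z^d) = V(z^e · R(z^d)) for all z ∈ ℂ. Then there exists a function H : ℂ → Y such that V(z) = H(z^d) and U(z) = H(z^e · R(z)^d) for all z ∈ ℂ. -/
/-!
Write `φ z = z ^ e * R (z ^ d)`, so that `U (z ^ d) = V (φ z)`. For a `d`-th root of unity `ζ` we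
have `φ (ζ z) = ζ ^ e φ z`, and since `e` is coprime to `d` (as `gcd(d, d₂) = 1`), every `d`-th
root of unity is of the form `ζ ^ e`. As `φ` is a polynomial map of degree `d₂ ≥ 1`, it is onto,
so `V` takes the same value at any two points with the same `d`-th power: `V` factors as
`H (z ^ d)`. Then writing `z = y ^ d` gives `U z = V (y ^ e R z) = H (z ^ e R(z) ^ d)`.
-/

open Polynomial Function

theorem exists_pow_eq_one_and_pow_eq {M : Type*} [Monoid M] {d e : ℕ} (hd : d ≠ 0)
    (hed : e.Coprime d) {ξ : M} (hξ : ξ ^ d = 1) : ∃ ζ : M, ζ ^ d = 1 ∧ ζ ^ e = ξ := by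
  obtain ⟨m, -, hm⟩ := Nat.exists_mul_mod_eq_of_coprime 1 hed hd
  refine ⟨ξ ^ m, by rw [← pow_mul, mul_comm, pow_mul, hξ, one_pow], ?_⟩
  rw [← pow_mul, mul_comm, pow_eq_pow_mod _ hξ, hm, ← pow_eq_pow_mod _ hξ, pow_one]

theorem IsAlgClosed.surjective_pow_mul_eval_pow {K : Type*} [Field K] [IsAlgClosed K]
    {p : K[X]} (hp : p ≠ 0) {d e : ℕ} (hd : 0 < d) (hdeg : e + d * p.natDegree ≠ 0) :
    Surjective fun z : K => z ^ e * p.eval (z ^ d) := by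
  have hq : (X ^ e * expand K d p).natDegree ≠ 0 := by
    rwa [natDegree_X_pow_mul _ ((expand_ne_zero hd).2 hp), natDegree_expand, add_comm, mul_comm]
  simpa only [eval_mul, eval_pow, eval_X, expand_eval] using IsAlgClosed.eval_surjective hq

theorem factorsThrough_pow_of_comp_eq {K Y : Type*} [Field K] {d e : ℕ} (hd : d ≠ 0)
    (hed : e.Coprime d) {R : K[X]} (hsurj : Surjective fun z : K => z ^ e * R.eval (z ^ d))
    {U V : K → Y} (h : ∀ z, U (z ^ d) = V (z ^ e * R.eval (z ^ d))) :
    V.FactorsThrough (· ^ d) := by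
  intro a b (hab : a ^ d = b ^ d)
  obtain rfl | hb := eq_or_ne b 0
  · rw [(pow_eq_zero_iff hd).1 (hab.trans (zero_pow hd))]
  obtain ⟨ζ, hζd, hζe⟩ := exists_pow_eq_one_and_pow_eq hd hed (ξ := a / b)
    (by rw [div_pow, hab, div_self (pow_ne_zero d hb)])
  obtain ⟨z, rfl⟩ := hsurj b
  have ha : a = (ζ * z) ^ e * R.eval ((ζ * z) ^ d) := by
    rw [mul_pow, mul_pow, hζd, one_mul, hζe, mul_assoc, div_mul_cancel₀ a hb]
  rw [ha, ← h, mul_pow, hζd, one_mul, h]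

theorem stmt2 {Y : Type*} (d e : ℕ) (hd : 1 ≤ d) (R : Polynomial ℂ) (hR : R ≠ 0)
    (d₂ : ℕ) (hd₂def : d₂ = e + d * R.natDegree) (hd₂ : 1 ≤ d₂) (hcop : Nat.gcd d d₂ = 1)
    (U V : ℂ → Y) (h : ∀ z : ℂ, U (z ^ d) = V (z ^ e * R.eval (z ^ d))) :
    ∃ H : ℂ → Y, (∀ z : ℂ, V z = H (z ^ d)) ∧ (∀ z : ℂ, U z = H (z ^ e * (R.eval z) ^ d)) := by
  have hed : e.Coprime d := by
    rw [Nat.coprime_comm, ← Nat.coprime_add_mul_left_right d e R.natDegree, ← hd₂def]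
    exact hcop
  have hsurj := IsAlgClosed.surjective_pow_mul_eval_pow hR hd (e := e) (by omega)
  have hV := factorsThrough_pow_of_comp_eq (by omega) hed hsurj h
  refine ⟨extend (· ^ d) V V, fun z => (hV.extend_apply V z).symm, fun z => ?_⟩
  obtain ⟨y, rfl⟩ := IsAlgClosed.exists_pow_nat_eq z hd
  rw [h, ← hV.extend_apply V, mul_pow, ← pow_mul, mul_comm e d, pow_mul]
end

section
/- Let d₁, d₂ ≥ 1 be coprime integers, let Y be an arbitrary type, and let U, V : ℂ → Y be functions such that U(T_{d₁}(z)) = V(T_{d₂}(z)) for all z ∈ ℂ. Then there exists a function H : ℂ → Y such that U(z) = H(T_{d₂}(z)) and V(z) = H(T_{d₁}(z)) for all z ∈ ℂ. -/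
open Polynomial Polynomial.Chebyshev

theorem stmt3 {Y : Type*} (d₁ d₂ : ℕ) (hd₁ : 1 ≤ d₁) (hd₂ : 1 ≤ d₂)
    (hcop : Nat.Coprime d₁ d₂) (U V : ℂ → Y)
    (h : ∀ z : ℂ, U ((T ℂ d₁).eval z) = V ((T ℂ d₂).eval z)) :
    ∃ H : ℂ → Y, (∀ z : ℂ, U z = H ((T ℂ d₂).eval z)) ∧
      (∀ z : ℂ, V z = H ((T ℂ d₁).eval z)) := by
  classical
  have hcos : ∀ w, Complex.cos (Function.surjInv Complex.cos_surjective w) = w :=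
    Function.surjInv_eq Complex.cos_surjective
  set c : ℂ → ℂ := Function.surjInv Complex.cos_surjective with hc
  have hd₁0 : (d₁ : ℂ) ≠ 0 := Nat.cast_ne_zero.mpr (by omega)
  have hd₂0 : (d₂ : ℂ) ≠ 0 := Nat.cast_ne_zero.mpr (by omega)
  have h12 : (d₁ : ℂ) * d₂ ≠ 0 := mul_ne_zero hd₁0 hd₂0
  set g : ℂ → Y := fun θ => U (Complex.cos (d₁ * θ)) with hg
  have hgV : ∀ θ, g θ = V (Complex.cos (d₂ * θ)) := by
    intro θ
    have := h (Complex.cos θ)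
    rw [T_complex_cos, T_complex_cos] at this
    simpa [hg] using this
  -- invariance under shift by 2πb/d₁
  have inv1 : ∀ (θ : ℂ) (b : ℤ), g (θ + 2*Real.pi*b/d₁) = g θ := by
    intro θ b
    have : (d₁:ℂ) * (θ + 2*Real.pi*b/d₁) = d₁*θ + b*(2*Real.pi) := by
      field_simp
    simp only [hg, this, Complex.cos_add_int_mul_two_pi]
  have inv2 : ∀ (θ : ℂ) (a : ℤ), g (θ + 2*Real.pi*a/d₂) = g θ := by
    intro θ a
    rw [hgV, hgV]
    have : (d₂:ℂ) * (θ + 2*Real.pi*a/d₂) = d₂*θ + a*(2*Real.pi) := by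
      field_simp
    rw [this, Complex.cos_add_int_mul_two_pi]
  have hneg : ∀ θ : ℂ, g (-θ) = g θ := by
    intro θ; simp [hg, mul_neg]
  -- Bezout
  obtain ⟨a, b, hab⟩ : ∃ a b : ℤ, a * d₁ + b * d₂ = 1 := by
    obtain ⟨a, b, hab⟩ := (Int.isCoprime_iff_gcd_eq_one.mpr
      (by rw [Int.gcd_natCast_natCast]; exact hcop))
    exact ⟨a, b, hab⟩
  have habC : (a:ℂ)*d₁ + b*d₂ = 1 := by exact_mod_cast hab
  have invM : ∀ (k : ℤ) (θ : ℂ), g (θ + 2*k*Real.pi/(d₁*d₂)) = g θ := by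
    intro k θ
    have key : θ + 2*(k:ℂ)*Real.pi/(d₁*d₂) =
        (θ + 2*Real.pi*((k*a : ℤ):ℂ)/d₂) + 2*Real.pi*((k*b : ℤ):ℂ)/d₁ := by
      push_cast
      field_simp
      linear_combination (-(2:ℂ)*(k:ℂ)*Real.pi) * habC
    rw [key, inv1, inv2]
  have hkey : ∀ θ θ' : ℂ, Complex.cos ((d₁*d₂) * θ) = Complex.cos ((d₁*d₂) * θ') →
      g θ = g θ' := by
    intro θ θ' hcc
    rw [Complex.cos_eq_cos_iff] at hcc
    obtain ⟨k, hk | hk⟩ := hcc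
    · have : θ' = θ + 2*(k:ℂ)*Real.pi/(d₁*d₂) := by
        apply mul_left_cancel₀ h12
        rw [hk]; field_simp; ring
      rw [this, invM]
    · have : θ' = -θ + 2*(k:ℂ)*Real.pi/(d₁*d₂) := by
        apply mul_left_cancel₀ h12
        rw [hk]; field_simp; ring
      rw [this, invM, hneg]
  refine ⟨fun w => g (c w / (d₁*d₂)), ?_, ?_⟩
  · intro z
    obtain ⟨α, rfl⟩ := Complex.cos_surjective z
    rw [T_complex_cos]
    have h1 : g (α/d₁) = U (Complex.cos α) := by
      rw [hg]; simp only []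
      congr 1
      rw [mul_div_cancel₀ _ hd₁0]
    rw [← h1]
    refine (hkey _ _ ?_).symm
    rw [mul_div_cancel₀ _ h12, hcos]
    congr 1
    push_cast
    field_simp
  · intro z
    obtain ⟨α, rfl⟩ := Complex.cos_surjective z
    rw [T_complex_cos]
    have h1 : g (α/d₂) = V (Complex.cos α) := by
      rw [hgV]
      congr 2
      rw [mul_div_cancel₀ _ hd₂0]
    rw [← h1]
    refine (hkey _ _ ?_).symm
    rw [mul_div_cancel₀ _ h12, hcos]
    congr 1
    push_cast
    field_simp
end

section
/- Let d ≥ 1 and e ≥ 0 be integers, let R be a nonzero complex polynomial, set d₂ = e + d·(deg R), and assume d₂ ≥ 1 and gcd(d, d₂) = 1. Let U, V : ℂP¹ → ℂP¹ be continuous functions such that U(z^d) = V(z^e · R(z^d)) for all z ∈ ℂ. Then there exists a continuous function H : ℂP¹ → ℂP¹ such that V(z) = H(z^d) and U(z) = H(z^e · R(z)^d) for all z ∈ ℂ. -/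
open Polynomial OnePoint Filter Function Topology

theorem stmt4 (d e : ℕ) (hd : 1 ≤ d) (R : Polynomial ℂ) (hR : R ≠ 0)
    (d₂ : ℕ) (hd₂def : d₂ = e + d * R.natDegree) (hd₂ : 1 ≤ d₂) (hcop : Nat.gcd d d₂ = 1)
    (U V : OnePoint ℂ → OnePoint ℂ) (hU : Continuous U) (hV : Continuous V)
    (h : ∀ z : ℂ, U ((z ^ d : ℂ) : OnePoint ℂ) = V ((z ^ e * R.eval (z ^ d) : ℂ) : OnePoint ℂ)) :
    ∃ H : OnePoint ℂ → OnePoint ℂ, Continuous H ∧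
      (∀ z : ℂ, V (z : OnePoint ℂ) = H ((z ^ d : ℂ) : OnePoint ℂ)) ∧
      (∀ z : ℂ, U (z : OnePoint ℂ) = H ((z ^ e * (R.eval z) ^ d : ℂ) : OnePoint ℂ)) := by
  have hde : Nat.gcd d e = 1 := by
    rw [hd₂def, Nat.gcd_add_mul_left_right] at hcop; exact hcop
  -- the polynomial q(z) = z^e * R(z^d) has positive degree, hence is surjective
  set q : Polynomial ℂ := Polynomial.X ^ e * R.comp (Polynomial.X ^ d) with hqdef
  have hXd : ((Polynomial.X : Polynomial ℂ) ^ d).natDegree = d := by simp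
  have hRc : R.comp (Polynomial.X ^ d) ≠ 0 := by
    intro hc
    rw [Polynomial.comp_eq_zero_iff] at hc
    rcases hc with hc | ⟨_, hc⟩
    · exact hR hc
    · have : ((Polynomial.X : Polynomial ℂ) ^ d).natDegree = 0 := by
        rw [hc]; exact Polynomial.natDegree_C _
      rw [hXd] at this; omega
  have hqne : q ≠ 0 := mul_ne_zero (pow_ne_zero _ Polynomial.X_ne_zero) hRc
  have hqdeg : q.natDegree = d₂ := by
    rw [hqdef, Polynomial.natDegree_mul (pow_ne_zero _ Polynomial.X_ne_zero) hRc,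
      Polynomial.natDegree_comp, hXd, Polynomial.natDegree_pow, Polynomial.natDegree_X,
      mul_one, hd₂def, mul_comm]
  have hqpos : 0 < q.degree := by
    rw [Polynomial.degree_eq_natDegree hqne, hqdeg]
    exact_mod_cast hd₂
  have hqsurj : ∀ c : ℂ, ∃ z : ℂ, z ^ e * R.eval (z ^ d) = c := by
    intro c
    have hdeg : (q - Polynomial.C c).degree ≠ 0 := by
      rw [Polynomial.degree_sub_C hqpos]; exact hqpos.ne'
    obtain ⟨z, hz⟩ := Complex.isAlgClosed.exists_root _ hdeg
    refine ⟨z, ?_⟩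
    have := hz
    simp only [Polynomial.IsRoot, Polynomial.eval_sub, Polynomial.eval_C, sub_eq_zero,
      hqdef, Polynomial.eval_mul, Polynomial.eval_pow, Polynomial.eval_comp,
      Polynomial.eval_X] at this
    exact this
  -- invariance of V under multiplication by η^e, η a d-th root of unity
  have hA : ∀ η : ℂ, η ^ d = 1 → ∀ x : ℂ, V ((η ^ e * x : ℂ) : OnePoint ℂ) = V (x : OnePoint ℂ) := by
    intro η hη x
    obtain ⟨z, hz⟩ := hqsurj x
    have h1 := h z
    have h2 := h (η * z)
    rw [mul_pow, hη, one_mul] at h2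
    rw [mul_pow] at h2
    rw [hz] at h1
    have h5 : (η ^ e * z ^ e * R.eval (z ^ d) : ℂ) = η ^ e * x := by rw [← hz]; ring
    rw [h5] at h2
    rw [← h1, ← h2]
  -- invariance of V under multiplication by any d-th root of unity
  have hB : ∀ η : ℂ, η ^ d = 1 → ∀ x : ℂ, V ((η * x : ℂ) : OnePoint ℂ) = V (x : OnePoint ℂ) := by
    intro η hη x
    rcases eq_or_lt_of_le hd with hd1 | hd1
    · have : η = 1 := by rw [← hd1, pow_one] at hη; exact hη
      rw [this, one_mul]
    · obtain ⟨k, -, hk⟩ := Nat.exists_mul_mod_eq_one_of_coprime (Nat.Coprime.symm hde) hd1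
      have hηk : (η ^ k) ^ e = η := by
        rw [← pow_mul]
        conv_rhs => rw [← pow_one η]
        rw [← hk, mul_comm k e]
        conv_lhs => rw [← Nat.div_add_mod (e * k) d, pow_add, pow_mul, hη, one_pow, one_mul]
      have := hA (η ^ k) (by rw [← pow_mul, mul_comm, pow_mul, hη, one_pow]) x
      rwa [hηk] at this
  -- V is constant on fibers of z ↦ z^d
  have hC : ∀ z z' : ℂ, z ^ d = z' ^ d → V (z : OnePoint ℂ) = V (z' : OnePoint ℂ) := by
    intro z z' hzz
    rcases eq_or_ne z 0 with rfl | hz0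
    · have : z' = 0 := by
        have := hzz.symm
        rw [zero_pow (by omega)] at this
        exact pow_eq_zero_iff (by omega) |>.mp this
      rw [this]
    · have hη : (z' / z) ^ d = 1 := by
        rw [div_pow, ← hzz, div_self (pow_ne_zero _ hz0)]
      have := hB (z' / z) hη z
      rw [div_mul_cancel₀ _ hz0] at this
      exact this.symm
  -- the extended power map on the Riemann sphere
  set P : OnePoint ℂ → OnePoint ℂ := OnePoint.map (· ^ d) with hPdef
  have hPcont : Continuous P := by
    apply OnePoint.continuous_map (continuous_pow d)
    simp only [Filter.coclosedCompact_eq_cocompact]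
    apply tendsto_cocompact_of_tendsto_dist_comp_atTop (0 : ℂ)
    have := Polynomial.tendsto_norm_atTop (α := ℂ) (Polynomial.X ^ d)
      (by rw [Polynomial.degree_X_pow]; exact_mod_cast hd)
      (z := id) tendsto_norm_cocompact_atTop
    simpa [dist_zero_right] using this
  have hPsurj : Function.Surjective P := by
    intro y
    induction y using OnePoint.rec with
    | infty => exact ⟨∞, rfl⟩
    | coe w =>
      obtain ⟨z, hz⟩ := IsAlgClosed.exists_pow_nat_eq w (n := d) (by omega)
      exact ⟨(z : OnePoint ℂ), by simp [hPdef, hz]⟩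
  have hfib : ∀ x y : OnePoint ℂ, P x = P y → V x = V y := by
    intro x y hxy
    induction x using OnePoint.rec with
    | infty =>
      induction y using OnePoint.rec with
      | infty => rfl
      | coe z => exact absurd hxy.symm (by simp [hPdef, OnePoint.coe_ne_infty])
    | coe z =>
      induction y using OnePoint.rec with
      | infty => exact absurd hxy (by simp [hPdef, OnePoint.coe_ne_infty])
      | coe z' =>
        apply hC
        have : ((z ^ d : ℂ) : OnePoint ℂ) = ((z' ^ d : ℂ) : OnePoint ℂ) := hxy
        exact_mod_cast this
  -- construct H
  set H : OnePoint ℂ → OnePoint ℂ := V ∘ Function.surjInv hPsurj with hHdef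
  have hHP : ∀ x : OnePoint ℂ, H (P x) = V x := by
    intro x
    apply hfib
    exact Function.surjInv_eq hPsurj (P x)
  have hHcont : Continuous H := by
    have hquot : IsQuotientMap P :=
      (hPcont.isClosedMap).isQuotientMap hPcont hPsurj
    rw [hquot.continuous_iff]
    have : H ∘ P = V := funext hHP
    rw [this]; exact hV
  refine ⟨H, hHcont, fun z => ?_, fun w => ?_⟩
  · exact (hHP (z : OnePoint ℂ)).symm
  · obtain ⟨z, hz⟩ := IsAlgClosed.exists_pow_nat_eq w (n := d) (by omega)
    have h1 := h z
    rw [hz] at h1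
    have h2 := hHP ((z ^ e * R.eval w : ℂ) : OnePoint ℂ)
    have h3 : P ((z ^ e * R.eval w : ℂ) : OnePoint ℂ)
        = (((z ^ e * R.eval w) ^ d : ℂ) : OnePoint ℂ) := rfl
    rw [h3] at h2
    have h4 : ((z ^ e * R.eval w) ^ d : ℂ) = w ^ e * (R.eval w) ^ d := by
      rw [mul_pow, ← pow_mul, mul_comm e d, pow_mul, hz]
    rw [h4] at h2
    rw [h1]
    exact h2.symm
end

section
/- Let d₁, d₂ ≥ 1 be coprime integers and let U, V : ℂP¹ → ℂP¹ be continuous functions such that U(T_{d₁}(z)) = V(T_{d₂}(z)) for all z ∈ ℂ. Then there exists a continuous function H : ℂP¹ → ℂP¹ such that U(z) = H(T_{d₂}(z)) and V(z) = H(T_{d₁}(z)) for all z ∈ ℂ. -/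
open Polynomial Polynomial.Chebyshev OnePoint

open Complex Filter Function in
private lemma degT_aux : ∀ n : ℕ, (T ℂ (n : ℤ)).degree = n := by
  intro n
  induction n using Nat.strong_induction_on with
  | _ n ih =>
    match n with
    | 0 => simp [T_zero]
    | 1 => simp [T_one]
    | (m + 2) =>
      have h1 : (T ℂ ((m + 1 : ℕ) : ℤ)).degree = (m + 1 : ℕ) := ih (m + 1) (by omega)
      have h0 : (T ℂ ((m : ℕ) : ℤ)).degree = (m : ℕ) := ih m (by omega)
      have hT : T ℂ (((m : ℕ) : ℤ) + 2) = 2 * X * T ℂ (((m : ℕ) : ℤ) + 1) - T ℂ (m : ℕ) :=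
        T_add_two ℂ (m : ℕ)
      have hcast : ((m + 2 : ℕ) : ℤ) = ((m : ℕ) : ℤ) + 2 := by push_cast; ring
      have hcast1 : ((m + 1 : ℕ) : ℤ) = ((m : ℕ) : ℤ) + 1 := by push_cast; ring
      rw [hcast, hT]
      have hX : ((2 : ℂ[X]) * X).degree = 1 := by
        compute_degree!
      have hmul : ((2 : ℂ[X]) * X * T ℂ (((m : ℕ) : ℤ) + 1)).degree = ((m + 2 : ℕ) : WithBot ℕ) := by
        rw [degree_mul, hX, ← hcast1, h1]
        norm_cast
        omega
      rw [degree_sub_eq_left_of_degree_lt, hmul]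
      rw [hmul, h0]
      norm_cast
      omega

open Complex Filter Function in
theorem stmt5 (d₁ d₂ : ℕ) (hd₁ : 1 ≤ d₁) (hd₂ : 1 ≤ d₂) (hcop : Nat.Coprime d₁ d₂)
    (U V : OnePoint ℂ → OnePoint ℂ) (hU : Continuous U) (hV : Continuous V)
    (h : ∀ z : ℂ, U (((T ℂ d₁).eval z : ℂ) : OnePoint ℂ) = V (((T ℂ d₂).eval z : ℂ) : OnePoint ℂ)) :
    ∃ H : OnePoint ℂ → OnePoint ℂ, Continuous H ∧
      (∀ z : ℂ, U (z : OnePoint ℂ) = H (((T ℂ d₂).eval z : ℂ) : OnePoint ℂ)) ∧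
      (∀ z : ℂ, V (z : OnePoint ℂ) = H (((T ℂ d₁).eval z : ℂ) : OnePoint ℂ)) := by
  have hd₁0 : (d₁ : ℂ) ≠ 0 := by exact_mod_cast Nat.cast_ne_zero.2 (by omega)
  have hd₂0 : (d₂ : ℂ) ≠ 0 := by exact_mod_cast Nat.cast_ne_zero.2 (by omega)
  set p₁ : ℂ[X] := T ℂ d₁ with hp₁
  set p₂ : ℂ[X] := T ℂ d₂ with hp₂
  have evalT₁ : ∀ θ : ℂ, p₁.eval (Complex.cos θ) = Complex.cos (d₁ * θ) := by
    intro θ; exact_mod_cast Polynomial.Chebyshev.T_complex_cos θ (d₁ : ℤ)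
  have evalT₂ : ∀ θ : ℂ, p₂.eval (Complex.cos θ) = Complex.cos (d₂ * θ) := by
    intro θ; exact_mod_cast Polynomial.Chebyshev.T_complex_cos θ (d₂ : ℤ)
  -- g θ = U (cos θ)
  set g : ℂ → OnePoint ℂ := fun θ => U ((Complex.cos θ : ℂ) : OnePoint ℂ) with hg
  -- periodicity with period 2π d₁ / d₂
  have hper1 : Function.Periodic g (2 * Real.pi * d₁ / d₂) := by
    intro θ
    have h1 := h (Complex.cos (θ / d₁ + 2 * Real.pi / d₂))
    have h2 := h (Complex.cos (θ / d₁))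
    rw [evalT₁, evalT₂] at h1 h2
    have e1 : (d₁ : ℂ) * (θ / d₁ + 2 * Real.pi / d₂) = θ + 2 * Real.pi * d₁ / d₂ := by
      field_simp
    have e2 : (d₂ : ℂ) * (θ / d₁ + 2 * Real.pi / d₂) = d₂ * (θ / d₁) + 2 * Real.pi := by
      field_simp
    have e3 : (d₁ : ℂ) * (θ / d₁) = θ := by field_simp
    have hcos2π : Complex.cos ((d₂ : ℂ) * (θ / d₁) + 2 * Real.pi) = Complex.cos ((d₂ : ℂ) * (θ / d₁)) :=
      Complex.cos_add_two_pi _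
    rw [e1, e2] at h1
    rw [e3] at h2
    simp only [hg]
    rw [h1, hcos2π, ← h2]
  have hper2 : Function.Periodic g (2 * Real.pi) := by
    intro θ
    simp only [hg]
    rw [Complex.cos_add_two_pi]
  -- periodicity with period 2π / d₂
  have hperkey : Function.Periodic g (2 * Real.pi / d₂) := by
    obtain ⟨a, b, hab⟩ : ∃ a b : ℤ, (a : ℂ) * d₁ + b * d₂ = 1 := by
      refine ⟨Nat.gcdA d₁ d₂, Nat.gcdB d₁ d₂, ?_⟩
      have h0 := Nat.gcd_eq_gcd_ab d₁ d₂
      rw [hcop] at h0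
      have h1 : ((1 : ℤ) : ℂ) = ((d₁ * Nat.gcdA d₁ d₂ + d₂ * Nat.gcdB d₁ d₂ : ℤ) : ℂ) := by
        exact_mod_cast congrArg (fun x : ℤ => (x : ℂ)) h0
      push_cast at h1
      linear_combination -h1
    have hP1 : Function.Periodic g ((a : ℂ) * (2 * Real.pi * d₁ / d₂)) := hper1.int_mul a
    have hP2 : Function.Periodic g ((b : ℂ) * (2 * Real.pi)) := hper2.int_mul b
    intro θ
    have key : θ + 2 * Real.pi / d₂ = θ + (b : ℂ) * (2 * Real.pi) + (a : ℂ) * (2 * Real.pi * d₁ / d₂) := by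
      field_simp
      linear_combination (-2 * (Real.pi : ℂ)) * hab
    rw [key, hP1, hP2]
  -- well-definedness of descent
  have hcongrℂ : ∀ z z' : ℂ, p₂.eval z = p₂.eval z' → U z = U z' := by
    intro z z' hzz
    obtain ⟨θ, rfl⟩ := Complex.cos_surjective z
    obtain ⟨θ', rfl⟩ := Complex.cos_surjective z'
    rw [evalT₂, evalT₂] at hzz
    rw [Complex.cos_eq_cos_iff] at hzz
    obtain ⟨k, hk | hk⟩ := hzz
    · have hθ' : θ' = (k : ℂ) * (2 * Real.pi / d₂) + θ := by
        field_simp at hk ⊢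
        linear_combination hk
      have : g θ' = g θ := by
        rw [hθ', add_comm]
        exact hperkey.int_mul k θ
      simpa [hg] using this.symm
    · have hθ' : θ' = (k : ℂ) * (2 * Real.pi / d₂) + (-θ) := by
        field_simp at hk ⊢
        linear_combination hk
      have : g θ' = g (-θ) := by
        rw [hθ', add_comm]
        exact hperkey.int_mul k (-θ)
      have hneg : g (-θ) = g θ := by simp [hg, Complex.cos_neg]
      simpa [hg] using (this.trans hneg).symm
  -- the extended map on the sphere
  set Tm : OnePoint ℂ → OnePoint ℂ := OnePoint.map p₂.eval with hTm
  have hdeg₂ : 0 < p₂.degree := by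
    rw [hp₂, degT_aux d₂]
    exact_mod_cast Nat.pos_of_ne_zero (by omega)
  have hTmCont : Continuous Tm := by
    apply OnePoint.continuous_map p₂.continuous
    rw [coclosedCompact_eq_cocompact]
    have hn : Filter.Tendsto (fun x => ‖p₂.eval x‖) (cocompact ℂ) atTop :=
      p₂.tendsto_norm_atTop hdeg₂ tendsto_norm_cocompact_atTop
    have := tendsto_norm_atTop_iff_cobounded.mp hn
    rwa [Metric.cobounded_eq_cocompact] at this
  have hevalSurj : Function.Surjective p₂.eval := by
    intro w
    obtain ⟨φ, rfl⟩ := Complex.cos_surjective w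
    refine ⟨Complex.cos (φ / d₂), ?_⟩
    show p₂.eval (Complex.cos (φ / d₂)) = Complex.cos φ
    rw [evalT₂]
    congr 1
    field_simp
  have hTmSurj : Function.Surjective Tm := by
    intro w
    induction w using OnePoint.rec with
    | infty => exact ⟨∞, rfl⟩
    | coe w => obtain ⟨z, hz⟩ := hevalSurj w; exact ⟨(z : OnePoint ℂ), by simp [hTm, hz]⟩
  have hqm : Topology.IsQuotientMap Tm := hTmCont.isClosedMap.isQuotientMap hTmCont hTmSurj
  have hcongr : ∀ x y : OnePoint ℂ, Tm x = Tm y → U x = U y := by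
    intro x y hxy
    rw [hTm] at hxy
    induction x using OnePoint.rec with
    | infty =>
      induction y using OnePoint.rec with
      | infty => rfl
      | coe y =>
        rw [OnePoint.map_infty, OnePoint.map_some] at hxy
        exact (OnePoint.infty_ne_coe _ hxy).elim
    | coe x =>
      induction y using OnePoint.rec with
      | infty =>
        rw [OnePoint.map_infty, OnePoint.map_some] at hxy
        exact (OnePoint.coe_ne_infty _ hxy).elim
      | coe y =>
        apply hcongrℂ
        rw [OnePoint.map_some, OnePoint.map_some, OnePoint.coe_eq_coe] at hxy
        exact hxy
  refine ⟨U ∘ Function.surjInv hTmSurj, ?_, ?_, ?_⟩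
  · rw [hqm.continuous_iff]
    have : (U ∘ Function.surjInv hTmSurj) ∘ Tm = U := by
      funext x
      exact hcongr _ _ (Function.surjInv_eq hTmSurj (Tm x))
    rw [this]; exact hU
  · intro z
    have : ((p₂.eval z : ℂ) : OnePoint ℂ) = Tm (z : OnePoint ℂ) := rfl
    rw [this]
    exact (hcongr _ _ (Function.surjInv_eq hTmSurj (Tm (z : OnePoint ℂ)))).symm
  · intro z
    obtain ⟨ψ, rfl⟩ := Complex.cos_surjective z
    set φ := ψ / d₂ with hφ
    have hψ : Complex.cos ψ = Complex.cos ((d₂ : ℂ) * φ) := by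
      congr 1; rw [hφ]; field_simp
    rw [hψ]
    have hval : p₁.eval (Complex.cos ((d₂ : ℂ) * φ)) = p₂.eval (Complex.cos ((d₁ : ℂ) * φ)) := by
      rw [evalT₁, evalT₂]
      ring_nf
    rw [hval]
    have e1 : ((p₂.eval (Complex.cos ((d₁:ℂ) * φ)) : ℂ) : OnePoint ℂ)
        = Tm ((Complex.cos ((d₁:ℂ) * φ) : ℂ) : OnePoint ℂ) := rfl
    rw [e1]
    have e2 : (U ∘ Function.surjInv hTmSurj) (Tm ((Complex.cos ((d₁:ℂ) * φ) : ℂ) : OnePoint ℂ))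
        = U ((Complex.cos ((d₁:ℂ) * φ) : ℂ) : OnePoint ℂ) :=
      hcongr _ _ (Function.surjInv_eq hTmSurj _)
    rw [e2]
    have h3 := h (Complex.cos φ)
    rw [evalT₁, evalT₂] at h3
    exact h3.symm
end

section
/- Let d₁, d₂ ≥ 1 be coprime integers and let z₁, z₂ ∈ ℂ satisfy T_{d₁}(z₁) = T_{d₁}(z₂). Then there exist t₁, t₂ ∈ ℂ such that T_{d₂}(t₁) = z₁, T_{d₂}(t₂) = z₂, and T_{d₁}(t₁) = T_{d₁}(t₂). -/
open Polynomial Polynomial.Chebyshev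

theorem stmt8 (d₁ d₂ : ℕ) (hd₁ : 1 ≤ d₁) (hd₂ : 1 ≤ d₂) (hcop : Nat.Coprime d₁ d₂)
    (z₁ z₂ : ℂ) (h : (T ℂ d₁).eval z₁ = (T ℂ d₁).eval z₂) :
    ∃ t₁ t₂ : ℂ, (T ℂ d₂).eval t₁ = z₁ ∧ (T ℂ d₂).eval t₂ = z₂ ∧
      (T ℂ d₁).eval t₁ = (T ℂ d₁).eval t₂ := by
  obtain ⟨θ₁, hθ₁⟩ := Complex.cos_surjective z₁
  obtain ⟨θ₂, hθ₂⟩ := Complex.cos_surjective z₂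
  rw [← hθ₁, ← hθ₂, Polynomial.Chebyshev.T_complex_cos,
    Polynomial.Chebyshev.T_complex_cos, Complex.cos_eq_cos_iff] at h
  obtain ⟨k, hk⟩ : ∃ k : ℤ, ∃ θ₁' : ℂ, Complex.cos θ₁' = z₁ ∧
      (d₁ : ℂ) * θ₂ = 2 * k * Real.pi + (d₁ : ℂ) * θ₁' := by
    obtain ⟨k, hk | hk⟩ := h
    · exact ⟨k, θ₁, hθ₁, by push_cast at hk ⊢; linear_combination hk⟩
    · exact ⟨k, -θ₁, by rw [Complex.cos_neg, hθ₁],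
        by push_cast at hk ⊢; linear_combination hk⟩
  obtain ⟨θ₁, hθ₁, hk⟩ := hk
  obtain ⟨u, v, huv⟩ : ∃ u v : ℤ, u * d₁ + v * d₂ = 1 := by
    have h1 := hcop.gcd_eq_one
    refine ⟨Nat.gcdA d₁ d₂, Nat.gcdB d₁ d₂, ?_⟩
    have h2 := Nat.gcd_eq_gcd_ab d₁ d₂
    rw [h1] at h2
    push_cast at h2 ⊢
    linarith [h2]
  have huvC : (u : ℂ) * d₁ + v * d₂ = 1 := by exact_mod_cast congrArg (Int.cast : ℤ → ℂ) huv
  have hd₂C : (d₂ : ℂ) ≠ 0 := Nat.cast_ne_zero.mpr (by omega)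
  set m : ℤ := -k * u with hm
  set φ₁ : ℂ := θ₁ / d₂ with hφ₁
  set φ₂ : ℂ := (θ₂ + 2 * Real.pi * m) / d₂ with hφ₂
  have hmd : (k : ℂ) + m * d₁ = (k * v) * d₂ := by
    rw [hm]; push_cast; linear_combination (-(k : ℂ)) * huvC
  refine ⟨Complex.cos φ₁, Complex.cos φ₂, ?_, ?_, ?_⟩
  · rw [Polynomial.Chebyshev.T_complex_cos]
    have : ((d₂ : ℤ) : ℂ) * φ₁ = θ₁ := by
      push_cast [hφ₁]; field_simp
    rw [this, hθ₁]
  · rw [Polynomial.Chebyshev.T_complex_cos]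
    have : ((d₂ : ℤ) : ℂ) * φ₂ = θ₂ + m * (2 * Real.pi) := by
      push_cast [hφ₂]; field_simp
    rw [this, Complex.cos_add_int_mul_two_pi, hθ₂]
  · rw [Polynomial.Chebyshev.T_complex_cos, Polynomial.Chebyshev.T_complex_cos]
    have key : ((d₁ : ℤ) : ℂ) * φ₂ = ((d₁ : ℤ) : ℂ) * φ₁ + (k * v : ℤ) * (2 * Real.pi) := by
      rw [hφ₁, hφ₂]
      field_simp
      push_cast at hmd ⊢
      linear_combination 2 * (Real.pi : ℂ) * hmd + hk
    rw [key, Complex.cos_add_int_mul_two_pi]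
end

section
/- Let d ≥ 1 be an integer and let z₁, z₂ ∈ ℂ satisfy T_d(z₁) = T_d(z₂). Then there exist φ ∈ ℂ and a natural number k with k < d such that z₁ = cos φ and z₂ = cos(φ + 2πk/d), where cos denotes the complex cosine function. -/
/-! Writing `z₁ = cos a`, `z₂ = cos b`, the hypothesis reads `cos (d a) = cos (d b)`, so
`d b = ± d a + 2πn` for some integer `n`. Replacing `a` by `-a` if necessary, `b` is `a + 2πn/d`,
which differs from `a + 2πk/d`, `k = n mod d`, by a multiple of `2π`. -/

open Polynomial Polynomial.Chebyshev Complex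
open scoped Real

namespace Complex

theorem exists_lt_cos_eq_cos_add_two_pi_mul_div {d : ℕ} (hd : d ≠ 0) {a b : ℂ} {n : ℤ}
    (h : d * b = d * a + n * (2 * π)) :
    ∃ k < d, cos b = cos (a + 2 * π * k / d) := by
  have hd' : (d : ℤ) ≠ 0 := by exact_mod_cast hd
  have hk : ((n % d).toNat : ℤ) = n % d := Int.toNat_of_nonneg (Int.emod_nonneg n hd')
  refine ⟨(n % d).toNat, by have := Int.emod_lt_of_pos n (by omega : (0 : ℤ) < d); omega, ?_⟩
  have hn : (((n % d).toNat : ℤ) : ℂ) + d * ((n / d : ℤ) : ℂ) = n := by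
    rw [hk]; exact_mod_cast Int.emod_add_mul_ediv n d
  have hb : b = a + 2 * π * (n % d).toNat / d + (n / d : ℤ) * (2 * π) := by
    push_cast at hn
    field_simp
    linear_combination h - 2 * π * hn
  rw [hb, cos_add_int_mul_two_pi]

theorem exists_cos_eq_cos_add_two_pi_mul_div_of_cos_nat_mul_eq {d : ℕ} (hd : d ≠ 0) {a b : ℂ}
    (h : cos (d * a) = cos (d * b)) :
    ∃ (φ : ℂ) (k : ℕ), k < d ∧ cos a = cos φ ∧ cos b = cos (φ + 2 * π * k / d) := by
  obtain ⟨n, hn | hn⟩ := cos_eq_cos_iff.mp h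
  · obtain ⟨k, hk, hb⟩ :=
      exists_lt_cos_eq_cos_add_two_pi_mul_div hd (a := a) (b := b) (n := n)
      (by linear_combination hn)
    exact ⟨a, k, hk, rfl, hb⟩
  · obtain ⟨k, hk, hb⟩ :=
      exists_lt_cos_eq_cos_add_two_pi_mul_div hd (a := -a) (b := b) (n := n)
      (by linear_combination hn)
    exact ⟨-a, k, hk, (cos_neg a).symm, hb⟩

end Complex

theorem stmt9 (d : ℕ) (hd : 1 ≤ d) (z₁ z₂ : ℂ) (h : (T ℂ d).eval z₁ = (T ℂ d).eval z₂) :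
    ∃ (φ : ℂ) (k : ℕ), k < d ∧ z₁ = Complex.cos φ ∧
      z₂ = Complex.cos (φ + 2 * (Real.pi : ℂ) * (k : ℂ) / (d : ℂ)) := by
  obtain ⟨a, rfl⟩ := cos_surjective z₁
  obtain ⟨b, rfl⟩ := cos_surjective z₂
  have h' : cos (d * a) = cos (d * b) := by
    simpa only [Int.cast_natCast, T_complex_cos] using h
  exact exists_cos_eq_cos_add_two_pi_mul_div_of_cos_nat_mul_eq (by omega) h'
end
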